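/- Let w = ∏_{I∈𝓘} x_I and let R_w be the localization of R away from w. For f ∈ R, one has τ(f) = f if and only if the image of f in R_w lies in the k-subalgebra of R_w generated by {x_I, x_I^{−1} : I ∈ 𝓘} ∪ {y_i·z_i^{−1} − y_j·z_j^{−1} : 1 ≤ i < j ≤ n−1}. In other words, the invariant ring {f ∈ R : τ(f) = f} is the intersection, inside R_w, of R with the subalgebra k[(y_i/z_i − y_j/z_j)_{i,j}, (x_I^{±1})_{I∈𝓘}]. (Corollary 1.3(2): Cox(M̄_{0,n}) is obtained from this intersection by clearing denominators.) -/

import Mathlib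

open MvPolynomial

noncomputable section

/-- The index set 𝓘: subsets `I ⊆ {1,…,n−1}` with `1 ≤ |I| ≤ n−4`. -/
abbrev Idx (n : ℕ) : Type := {I : Finset (Fin (n - 1)) // 1 ≤ I.card ∧ I.card ≤ n - 4}

/-- The variables of the Cox ring of `X_n`: the `y_i` and the `x_I`. -/
abbrev Vars (n : ℕ) : Type := Fin (n - 1) ⊕ Idx n

variable (k : Type) [CommRing k]

/-- `R = k[y_1,…,y_{n−1},(x_I)_{I∈𝓘}]`, the Cox ring of the toric variety `X_n`. -/
abbrev R (n : ℕ) : Type := MvPolynomial (Vars n) k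

/-- The variable `y_i`. -/
def yy (n : ℕ) (i : Fin (n - 1)) : R k n := X (Sum.inl i)

/-- The variable `x_I`. -/
def xx (n : ℕ) (I : Idx n) : R k n := X (Sum.inr I)

/-- `z_i = ∏_{I∈𝓘, i∈I} x_I`. -/
def zz (n : ℕ) (i : Fin (n - 1)) : R k n :=
  ∏ I ∈ Finset.univ.filter (fun I : Idx n => i ∈ I.1), xx k n I

/-- The `k`-algebra homomorphism `τ : R → R[T]` with `τ(x_I) = x_I` and
`τ(y_i) = y_i + T·z_i`.  An element `f ∈ R` is invariant iff `τ f = Polynomial.C f`. -/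
def τₐ (n : ℕ) : R k n →ₐ[k] Polynomial (R k n) :=
  aeval (Sum.elim
    (fun i => Polynomial.C (yy k n i) + Polynomial.X * Polynomial.C (zz k n i))
    (fun I => Polynomial.C (xx k n I)))

/-- `w = ∏_{I∈𝓘} x_I`. -/
def ww (n : ℕ) : R k n := ∏ I : Idx n, xx k n I

/-- `R_w`, the localization of `R` away from `w` (each `x_I` becomes invertible). -/
abbrev Rw (n : ℕ) : Type := Localization.Away (ww k n)

/-- The localization map `R → R_w`. -/
def loc (n : ℕ) : R k n →+* Rw k n := algebraMap (R k n) (Rw k n)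

/-- The generating set `{x_I, x_I^{−1}} ∪ {y_i/z_i − y_j/z_j : i < j}` inside `R_w`. -/
def gens (n : ℕ) : Set (Rw k n) :=
  (Set.range fun I : Idx n => loc k n (xx k n I)) ∪
  (Set.range fun I : Idx n => Ring.inverse (loc k n (xx k n I))) ∪
  {r | ∃ i j : Fin (n - 1), i < j ∧
    r = loc k n (yy k n i) * Ring.inverse (loc k n (zz k n i)) -
        loc k n (yy k n j) * Ring.inverse (loc k n (zz k n j))}

-- ### auxiliary lemmas

lemma tau_x (n : ℕ) (I : Idx n) : τₐ k n (xx k n I) = Polynomial.C (xx k n I) := by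
  simp [τₐ, xx]

lemma tau_y (n : ℕ) (i : Fin (n - 1)) :
    τₐ k n (yy k n i) = Polynomial.C (yy k n i) + Polynomial.X * Polynomial.C (zz k n i) := by
  simp [τₐ, yy]

lemma tau_z (n : ℕ) (i : Fin (n - 1)) : τₐ k n (zz k n i) = Polynomial.C (zz k n i) := by
  simp [zz, map_prod, τₐ, xx]

lemma tau_w (n : ℕ) : τₐ k n (ww k n) = Polynomial.C (ww k n) := by
  show τₐ k n (∏ I : Idx n, xx k n I) = Polynomial.C (∏ I : Idx n, xx k n I)
  simp [map_prod, τₐ, xx]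

lemma loc_inj (n : ℕ) : Function.Injective (loc k n) := by
  apply IsLocalization.injective (M := Submonoid.powers (ww k n))
  rw [Submonoid.powers_le]
  have h : IsRegular (ww k n) := IsRegular.prod fun _ _ => isRegular_X
  rw [mem_nonZeroDivisors_iff_right]
  intro x hx
  exact h.left (show ww k n * x = ww k n * 0 by rw [mul_comm (ww k n) x, hx, mul_zero])

lemma isUnit_w (n : ℕ) : IsUnit (loc k n (ww k n)) :=
  IsLocalization.map_units (Rw k n) ⟨ww k n, Submonoid.mem_powers _⟩

lemma isUnit_x (n : ℕ) (I : Idx n) : IsUnit (loc k n (xx k n I)) := by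
  have hsplit : ww k n = xx k n I * ∏ J ∈ Finset.univ.erase I, xx k n J :=
    (Finset.mul_prod_erase _ _ (Finset.mem_univ I)).symm
  exact isUnit_of_mul_isUnit_left (M := Rw k n)
    (y := loc k n (∏ J ∈ Finset.univ.erase I, xx k n J))
    (by rw [← map_mul, ← hsplit]; exact isUnit_w k n)

lemma isUnit_z (n : ℕ) (i : Fin (n - 1)) : IsUnit (loc k n (zz k n i)) := by
  rw [zz, map_prod]
  exact Finset.prod_induction _ IsUnit (fun a b => IsUnit.mul) isUnit_one
    (fun I _ => isUnit_x k n I)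

lemma x_mem (n : ℕ) (I : Idx n) : loc k n (xx k n I) ∈ Algebra.adjoin k (gens k n) :=
  Algebra.subset_adjoin (Or.inl (Or.inl ⟨I, rfl⟩))

lemma z_mem (n : ℕ) (i : Fin (n - 1)) : loc k n (zz k n i) ∈ Algebra.adjoin k (gens k n) := by
  rw [zz, map_prod]
  exact Subalgebra.prod_mem _ fun I _ => x_mem k n I


/-- `f ∈ R` is invariant iff its image in `R_w` lies in the `k`-subalgebra
generated by the `x_I`, their inverses, and the differences `y_i·z_i^{−1} − y_j·z_j^{−1}`;
i.e. the invariant ring is `R ∩ k[(y_i/z_i − y_j/z_j), (x_I^{±1})]` inside `R_w`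
(Corollary 1.3(2)). -/
theorem stmt12 (n : ℕ) (hn : 5 ≤ n) (f : R k n) :
    τₐ k n f = Polynomial.C f ↔ loc k n f ∈ Algebra.adjoin k (gens k n) := by
  constructor
  · -- forward: invariance implies membership
    intro hf
    have h4 : n - 2 < n - 1 := by omega
    set j : Fin (n - 1) := ⟨n - 2, h4⟩ with hj
    set c : Rw k n := -(loc k n (yy k n j) * Ring.inverse (loc k n (zz k n j))) with hc
    set φ : R k n →ₐ[k] Rw k n :=
      ((Polynomial.aeval (R := R k n) c).restrictScalars k).comp (τₐ k n) with hφ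
    have key : ∀ g : R k n, φ g ∈ Algebra.adjoin k (gens k n) := by
      intro g
      induction g using MvPolynomial.induction_on with
      | C a =>
        have : φ (MvPolynomial.C a) = algebraMap k (Rw k n) a := by
          rw [← MvPolynomial.algebraMap_eq]; exact AlgHom.commutes _ a
        rw [this]; exact Subalgebra.algebraMap_mem _ a
      | add p q hp hq => rw [map_add]; exact add_mem hp hq
      | mul_X p v hp =>
        rw [map_mul]
        refine mul_mem hp ?_
        cases v with
        | inr I =>
          have : φ (X (Sum.inr I)) = loc k n (xx k n I) := by
            rw [hφ, AlgHom.comp_apply, show (X (Sum.inr I) : R k n) = xx k n I from rfl,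
              tau_x, AlgHom.restrictScalars_apply, Polynomial.aeval_C]
            rfl
          rw [this]; exact x_mem k n I
        | inl i =>
          have hφy : φ (X (Sum.inl i)) = loc k n (yy k n i) + c * loc k n (zz k n i) := by
            rw [hφ, AlgHom.comp_apply, show (X (Sum.inl i) : R k n) = yy k n i from rfl,
              tau_y, AlgHom.restrictScalars_apply, map_add, map_mul, Polynomial.aeval_C,
              Polynomial.aeval_C, Polynomial.aeval_X]
            rfl
          rw [hφy]
          by_cases hij : i = j
          · rw [hij]
            have h1 : loc k n (zz k n j) * Ring.inverse (loc k n (zz k n j)) = 1 :=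
              Ring.mul_inverse_cancel _ (isUnit_z k n j)
            have : loc k n (yy k n j) + c * loc k n (zz k n j) = 0 := by
              rw [hc]; linear_combination (-(loc k n (yy k n j))) * h1
            rw [this]; exact zero_mem _
          · have hij' : i < j := by
              have h5 : (i : ℕ) < n - 1 := i.2
              have h6 : (i : ℕ) ≠ n - 2 := fun h => hij (Fin.ext h)
              have h7 : (j : ℕ) = n - 2 := rfl
              rw [Fin.lt_def, h7]
              omega
            have hd : loc k n (yy k n i) * Ring.inverse (loc k n (zz k n i)) -
                loc k n (yy k n j) * Ring.inverse (loc k n (zz k n j)) ∈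
                Algebra.adjoin k (gens k n) :=
              Algebra.subset_adjoin (Or.inr ⟨i, j, hij', rfl⟩)
            have h1 : loc k n (zz k n i) * Ring.inverse (loc k n (zz k n i)) = 1 :=
              Ring.mul_inverse_cancel _ (isUnit_z k n i)
            have heq : loc k n (yy k n i) + c * loc k n (zz k n i) =
                loc k n (zz k n i) *
                  (loc k n (yy k n i) * Ring.inverse (loc k n (zz k n i)) -
                   loc k n (yy k n j) * Ring.inverse (loc k n (zz k n j))) := by
              rw [hc]; linear_combination (-(loc k n (yy k n i))) * h1
            rw [heq]
            exact mul_mem (z_mem k n i) hd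
    have hφf : φ f = loc k n f := by
      rw [hφ, AlgHom.comp_apply, hf, AlgHom.restrictScalars_apply, Polynomial.aeval_C]
      rfl
    rw [← hφf]; exact key f
  · -- backward: membership implies invariance
    intro hf
    set σ : R k n →+* Polynomial (Rw k n) :=
      (Polynomial.mapRingHom (loc k n)).comp (τₐ k n).toRingHom with hσ
    have hσ_apply : ∀ a : R k n, σ a = Polynomial.map (loc k n) (τₐ k n a) := fun a => rfl
    have hσw : IsUnit (σ (ww k n)) := by
      rw [hσ_apply, tau_w, Polynomial.map_C]
      exact (isUnit_w k n).map Polynomial.C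
    set τ' : Rw k n →+* Polynomial (Rw k n) := IsLocalization.Away.lift (g := σ) (ww k n) hσw with hτ'
    have hlift : ∀ a : R k n, τ' (loc k n a) = Polynomial.map (loc k n) (τₐ k n a) := by
      intro a
      rw [hτ', show loc k n a = algebraMap (R k n) (Rw k n) a from rfl,
        IsLocalization.Away.lift_eq]
      exact hσ_apply a
    have hinv : ∀ a : R k n, τₐ k n a = Polynomial.C a → IsUnit (loc k n a) →
        τ' (Ring.inverse (loc k n a)) = Polynomial.C (Ring.inverse (loc k n a)) := by
      intro a ha hu
      have h1 : τ' (loc k n a) = Polynomial.C (loc k n a) := by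
        rw [hlift, ha, Polynomial.map_C]
      obtain ⟨u, hu'⟩ := hu
      rw [← hu', Ring.inverse_unit]
      have h2 : τ' ↑u⁻¹ * Polynomial.C (loc k n a) = 1 := by
        rw [← h1, ← map_mul, ← hu', Units.inv_mul, map_one]
      calc τ' ↑u⁻¹ = τ' ↑u⁻¹ * (Polynomial.C (loc k n a) * Polynomial.C ↑u⁻¹) := by
            rw [← Polynomial.C_mul, ← hu', Units.mul_inv, Polynomial.C_1, mul_one]
        _ = Polynomial.C ↑u⁻¹ := by rw [← mul_assoc, h2, one_mul]
    have hfrac : ∀ i : Fin (n - 1),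
        τ' (loc k n (yy k n i) * Ring.inverse (loc k n (zz k n i))) =
        Polynomial.C (loc k n (yy k n i) * Ring.inverse (loc k n (zz k n i))) +
          Polynomial.X := by
      intro i
      rw [map_mul, hlift, tau_y, hinv _ (tau_z k n i) (isUnit_z k n i)]
      rw [Polynomial.map_add, Polynomial.map_C, Polynomial.map_mul, Polynomial.map_C,
        Polynomial.map_X]
      have h1 : loc k n (zz k n i) * Ring.inverse (loc k n (zz k n i)) = 1 :=
        Ring.mul_inverse_cancel _ (isUnit_z k n i)
      rw [add_mul, mul_assoc, ← Polynomial.C_mul, ← Polynomial.C_mul, h1, Polynomial.C_1,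
        mul_one]
    have main : τ' (loc k n f) = Polynomial.C (loc k n f) := by
      refine Algebra.adjoin_induction ?_ ?_ ?_ ?_ hf
      · rintro x (hx | hx)
        · rcases hx with ⟨I, rfl⟩ | ⟨I, rfl⟩
          · rw [hlift, tau_x, Polynomial.map_C]
          · exact hinv _ (tau_x k n I) (isUnit_x k n I)
        · obtain ⟨i, j, hij, rfl⟩ := hx
          rw [map_sub, hfrac, hfrac, map_sub]
          ring
      · intro r
        have : algebraMap k (Rw k n) r = loc k n (algebraMap k (R k n) r) :=
          IsScalarTower.algebraMap_apply k (R k n) (Rw k n) r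
        rw [this, hlift]
        rw [show τₐ k n (algebraMap k (R k n) r) = algebraMap k (Polynomial (R k n)) r from
          AlgHom.commutes _ r]
        rw [show algebraMap k (Polynomial (R k n)) r =
          Polynomial.C (algebraMap k (R k n) r) from rfl, Polynomial.map_C]
      · intro x y _ _ hx hy; rw [map_add, hx, hy, map_add]
      · intro x y _ _ hx hy; rw [map_mul, hx, hy, ← Polynomial.C_mul]
    apply Polynomial.map_injective (loc k n) (loc_inj k n)
    rw [← hlift, main, Polynomial.map_C]


end
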